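/- Let A = {a_n}, B = {b_n} be two sequences of positive integers, ψ, φ: ℕ → (0,1) two positive functions, and s ∈ (0,1]. Define S_{A,B}(ψ,φ) = { x ∈ [0,1] : ‖a_n x‖ < ψ(n) and ‖b_n x‖ < φ(n) for infinitely many n ∈ ℕ }. If Σ_{n=1}^∞ [ gcd(a_n,b_n) + a_n b_n · max{ψ(n)/a_n, φ(n)/b_n} ] · min{ψ(n)/a_n, φ(n)/b_n}^s < ∞, then the s-dimensional Hausdorff measure of S_{A,B}(ψ,φ) is zero. -/

import Mathlib

open MeasureTheory Filter Set

/-- Distance from a real number to the nearest integer. -/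
noncomputable def nint (x : ℝ) : ℝ := |x - (round x : ℝ)|

/-!
Hausdorff–Cantelli: if each `E n` is covered by `N n` balls of radius `r n` and
`∑ N n * r n ^ s < ∞`, then `limsup E` is `H^s`-null. Here `E n` is the set of `x ∈ [0, 1]` with
`‖a_n x‖ < ψ(n)` and `‖b_n x‖ < φ(n)`; say `ψ(n)/a_n ≤ φ(n)/b_n`. Such an `x` lies within
`ψ(n)/a_n` of `p/a_n`, where `p = round (a_n x) ∈ [0, a_n]`, and then
`‖b_n p / a_n‖ < φ(n) + b_n ψ(n)/a_n ≤ 2 φ(n)`. With `g = gcd(a_n, b_n)` the fractions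
`b_n p / a_n` have denominator `a_n / g` and are periodic in `p` with that period, so at most
`(4 φ(n) a_n / g + 1)(g + 1)` values of `p` qualify, giving
`N n ≤ 8 (g + a_n b_n max(ψ(n)/a_n, φ(n)/b_n))` balls of radius `min(ψ(n)/a_n, φ(n)/b_n)`.
-/

open Topology Metric
open scoped ENNReal

namespace MeasureTheory.Measure

theorem hausdorffMeasure_limsup_eq_zero {X : Type*} [EMetricSpace X] [MeasurableSpace X]
    [BorelSpace X] {ι : ℕ → Type*} [∀ n, Countable (ι n)] {d : ℝ}
    (hd : 0 < d) (E : ℕ → Set X) (t : ∀ n, ι n → Set X) (hE : ∀ n, E n ⊆ ⋃ i, t n i)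
    (hsum : ∑' n, ∑' i, ediam (t n i) ^ d ≠ ∞) :
    μH[d] (limsup E atTop) = 0 := by
  set v : ℕ → ℝ≥0∞ := fun n => ∑' i, ediam (t n i) ^ d
  set w : ℕ → ℝ≥0∞ := fun N => ∑' j, v (j + N)
  have hw : Tendsto w atTop (𝓝 0) := ENNReal.tendsto_sum_nat_add v hsum
  have hr : Tendsto (fun N => w N ^ d⁻¹) atTop (𝓝 0) := by
    simpa [ENNReal.zero_rpow_of_pos (inv_pos.2 hd)] using hw.ennrpow_const d⁻¹
  let tail : ∀ N, (Σ j, ι (j + N)) → Set X := fun N ji => t (ji.1 + N) ji.2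
  have hdiam : ∀ N ji, ediam (tail N ji) ≤ w N ^ d⁻¹ := fun N ⟨j, i⟩ =>
    (ENNReal.le_rpow_inv_iff hd).2 <|
      (ENNReal.le_tsum (f := fun i => ediam (t (j + N) i) ^ d) i).trans (ENNReal.le_tsum j)
  have hcover : ∀ N, limsup E atTop ⊆ ⋃ ji, tail N ji := by
    intro N x hx
    obtain ⟨n, hnN, hxn⟩ := frequently_atTop.1 (mem_limsup_iff_frequently_mem.1 hx) N
    obtain ⟨j, rfl⟩ : ∃ j, n = j + N := ⟨n - N, by omega⟩
    obtain ⟨i, hi⟩ := mem_iUnion.1 (hE _ hxn)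
    exact mem_iUnion.2 ⟨⟨j, i⟩, hi⟩
  have hsum_tail : ∀ N, ∑' ji, ediam (tail N ji) ^ d = w N := fun N =>
    ENNReal.tsum_sigma' (fun ji => ediam (tail N ji) ^ d)
  refine le_antisymm ?_ zero_le
  calc μH[d] (limsup E atTop)
      ≤ liminf (fun N => ∑' ji, ediam (tail N ji) ^ d) atTop :=
        hausdorffMeasure_le_liminf_tsum d _ _ hr tail (.of_forall hdiam) (.of_forall hcover)
    _ = 0 := by simp_rw [hsum_tail]; exact hw.liminf_eq

theorem hausdorffMeasure_limsup_eq_zero_of_summable {X : Type*} [MetricSpace X]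
    [MeasurableSpace X] [BorelSpace X] {d : ℝ} (hd : 0 < d) (E : ℕ → Set X) (C : ℕ → Finset X)
    (r : ℕ → ℝ) (hr : ∀ n, 0 ≤ r n) (hE : ∀ n, E n ⊆ ⋃ c ∈ C n, closedBall c (r n))
    (hsum : Summable fun n => ((C n).card : ℝ) * r n ^ d) :
    μH[d] (limsup E atTop) = 0 := by
  refine hausdorffMeasure_limsup_eq_zero hd E (fun n (c : C n) => closedBall (c : X) (r n))
    (fun n => (hE n).trans_eq (by rw [← Finset.set_biUnion_coe, biUnion_eq_iUnion]; rfl)) ?_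
  have hball : ∀ n (c : X), ediam (closedBall c (r n)) ^ d ≤ ENNReal.ofReal ((2 * r n) ^ d) := by
    intro n c
    rw [← ENNReal.ofReal_rpow_of_nonneg (by linarith [hr n]) hd.le, ← closedEBall_ofReal (hr n),
      ENNReal.ofReal_mul zero_le_two, ENNReal.ofReal_ofNat]
    gcongr
    exact ediam_closedEBall_le
  have hterm : ∀ n, ∑' c : C n, ediam (closedBall (c : X) (r n)) ^ d
      ≤ ENNReal.ofReal (2 ^ d * (((C n).card : ℝ) * r n ^ d)) := by
    intro n
    calc ∑' c : C n, ediam (closedBall (c : X) (r n)) ^ d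
        ≤ ∑' _ : C n, ENNReal.ofReal ((2 * r n) ^ d) := ENNReal.tsum_le_tsum fun c => hball n c
      _ = ENNReal.ofReal (2 ^ d * (((C n).card : ℝ) * r n ^ d)) := by
        rw [tsum_fintype, Finset.sum_const, Finset.card_univ, Fintype.card_coe, nsmul_eq_mul,
          ← ENNReal.ofReal_natCast, ← ENNReal.ofReal_mul (by positivity),
          Real.mul_rpow zero_le_two (hr n), mul_left_comm]
  refine ne_top_of_le_ne_top ?_ (ENNReal.tsum_le_tsum hterm)
  rw [← ENNReal.ofReal_tsum_of_nonneg (fun n => by have := hr n; positivity) (hsum.mul_left _)]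
  exact ENNReal.ofReal_ne_top

end MeasureTheory.Measure

theorem card_filter_nint_lt_le_of_coprime {a b : ℕ} (hab : a.Coprime b) (ha : 0 < a) (g : ℕ)
    {ε : ℝ} (hε : 0 ≤ ε) :
    (((Finset.Icc (0 : ℤ) (g * a)).filter fun p : ℤ => nint (b * p / a) < ε).card : ℝ)
      ≤ (2 * ε * a + 1) * (g + 1) := by
  set S := (Finset.Icc (0 : ℤ) (g * a)).filter fun p : ℤ => nint (b * p / a) < ε
  have haR : (0 : ℝ) < a := by exact_mod_cast ha
  set K : ℤ := ⌊ε * a⌋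
  -- `p` is determined by the signed residue `b p - q a` of `b p` modulo `a` and by `p / a`
  let f : ℤ → ℤ × ℤ := fun p => (b * p - round ((b * p : ℝ) / a) * a, p / a)
  have hmaps : MapsTo f S ↑(Finset.Icc (-K) K ×ˢ Finset.Icc 0 (g : ℤ)) := by
    intro p hp
    simp only [S, Finset.coe_filter, Finset.mem_Icc, mem_ofPred_eq] at hp
    obtain ⟨⟨hp0, hpa⟩, hpε⟩ := hp
    have hres : |((b * p - round ((b * p : ℝ) / a) * a : ℤ) : ℝ)| ≤ ε * a := by
      have : ((b * p - round ((b * p : ℝ) / a) * a : ℤ) : ℝ)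
          = ((b * p : ℝ) / a - round ((b * p : ℝ) / a)) * a := by
        push_cast; field_simp
      rw [this, abs_mul, abs_of_pos haR]
      exact mul_le_mul_of_nonneg_right hpε.le haR.le
    simp only [Finset.coe_product, Finset.coe_Icc, mem_prod, mem_Icc, f, ← abs_le]
    refine ⟨Int.le_floor.2 (by exact_mod_cast hres), Int.ediv_nonneg hp0 (by positivity),
      Int.ediv_le_of_le_mul (by exact_mod_cast ha) hpa⟩
  have hinj : InjOn f S := by
    intro p₁ _ p₂ _ h
    simp only [f, Prod.mk.injEq] at h
    obtain ⟨hres, hdiv⟩ := h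
    have hdvd : (a : ℤ) ∣ (p₁ - p₂) * b :=
      ⟨round ((b * p₁ : ℝ) / a) - round ((b * p₂ : ℝ) / a), by linear_combination hres⟩
    have hmod : p₁ % a = p₂ % a := (Int.modEq_iff_dvd.2 <| by
      simpa using ((Nat.isCoprime_iff_coprime.2 hab).dvd_of_dvd_mul_right hdvd)).symm
    rw [← Int.ediv_mul_add_emod p₁ a, ← Int.ediv_mul_add_emod p₂ a, hdiv, hmod]
  have hK0 : 0 ≤ K := Int.floor_nonneg.2 (by positivity)
  have hK : (2 * K + 1 : ℝ) ≤ 2 * ε * a + 1 := by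
    have := Int.floor_le (ε * a); linarith
  calc (S.card : ℝ) ≤ (Finset.Icc (-K) K ×ˢ Finset.Icc 0 (g : ℤ)).card := by
        exact_mod_cast Finset.card_le_card_of_injOn f hmaps hinj
    _ = (2 * K + 1) * (g + 1) := by
      have : ((Finset.Icc (-K) K ×ˢ Finset.Icc 0 (g : ℤ)).card : ℤ) = (2 * K + 1) * (g + 1) := by
        rw [Finset.card_product, Int.card_Icc, Int.card_Icc]
        push_cast [Int.toNat_of_nonneg (by omega : 0 ≤ K + 1 - -K),
          Int.toNat_of_nonneg (by omega : 0 ≤ (g : ℤ) + 1 - 0)]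
        ring
      exact_mod_cast this
    _ ≤ (2 * ε * a + 1) * (g + 1) := by gcongr

theorem card_filter_nint_lt_le {a : ℕ} (b : ℕ) (ha : 0 < a) {ε : ℝ} (hε : 0 ≤ ε) :
    (((Finset.Icc (0 : ℤ) a).filter fun p : ℤ => nint (b * p / a) < ε).card : ℝ)
      ≤ 2 * Nat.gcd a b + 4 * ε * a := by
  obtain ⟨a', b', hcop, hAa, hBb⟩ := Nat.exists_coprime a b
  set g := Nat.gcd a b
  have hg : 0 < g := Nat.gcd_pos_of_pos_left b ha
  have ha' : 0 < a' := Nat.pos_of_mul_pos_right (hAa ▸ ha)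
  have hgR : (1 : ℝ) ≤ g := by exact_mod_cast hg
  have hcancel : ∀ p : ℤ, (b * p / a : ℝ) = b' * p / a' := fun p => by
    rw [hAa, hBb]; push_cast; field_simp
  have hset : ((Finset.Icc (0 : ℤ) a).filter fun p : ℤ => nint (b * p / a) < ε)
      = (Finset.Icc (0 : ℤ) (g * a')).filter fun p : ℤ => nint (b' * p / a') < ε := by
    simp_rw [hcancel]
    rw [hAa, Nat.cast_mul, mul_comm]
  rw [hset, hAa, Nat.cast_mul]
  have ha'R : (0 : ℝ) ≤ a' := Nat.cast_nonneg _
  refine (card_filter_nint_lt_le_of_coprime hcop ha' g hε).trans ?_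
  nlinarith [mul_nonneg hε ha'R, mul_nonneg (mul_nonneg hε ha'R) (sub_nonneg.2 hgR)]

theorem nint_le_add_abs_sub (x y : ℝ) : nint x ≤ nint y + |x - y| :=
  calc nint x ≤ |x - round y| := round_le x (round y)
    _ ≤ |x - y| + nint y := abs_sub_le x y _
    _ = nint y + |x - y| := add_comm _ _

theorem subset_iUnion_closedBall_div {a : ℕ} (b : ℕ) (ha : 0 < a) (ψ φ : ℝ) :
    {x | x ∈ Icc (0 : ℝ) 1 ∧ nint (a * x) < ψ ∧ nint (b * x) < φ}
      ⊆ ⋃ p ∈ (Finset.Icc (0 : ℤ) a).filter (fun p : ℤ => nint (b * p / a) < φ + b * ψ / a),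
          closedBall (p / a : ℝ) (ψ / a) := by
  rintro x ⟨⟨hx0, hx1⟩, hψ, hφ⟩
  have haR : (0 : ℝ) < a := by exact_mod_cast ha
  set p := round ((a : ℝ) * x)
  have hp := abs_le.1 (abs_sub_round ((a : ℝ) * x))
  have hp0 : 0 ≤ p := by
    have : (-1 : ℝ) < p := by nlinarith
    have : (-1 : ℤ) < p := by exact_mod_cast this
    omega
  have hpa : p ≤ a := by
    have : (p : ℝ) < a + 1 := by nlinarith
    have : p < (a : ℤ) + 1 := by exact_mod_cast this
    omega
  have hdist : |x - p / a| = nint (a * x) / a := by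
    rw [show x - p / a = (a * x - p) / a by field_simp, abs_div, abs_of_pos haR, nint]
  have hdist' : |x - p / a| < ψ / a := hdist ▸ div_lt_div_of_pos_right hψ haR
  have hnint : nint (b * p / a) < φ + b * ψ / a :=
    calc nint (b * p / a) ≤ nint (b * x) + |b * p / a - b * x| := nint_le_add_abs_sub _ _
      _ = nint (b * x) + b * |x - p / a| := by
        rw [abs_sub_comm, ← mul_div_assoc', ← mul_sub, abs_mul, Nat.abs_cast]
      _ < φ + b * ψ / a := by
        rw [mul_div_assoc]
        exact add_lt_add_of_lt_of_le hφ (mul_le_mul_of_nonneg_left hdist'.le (Nat.cast_nonneg b))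
  simp only [mem_iUnion, Finset.mem_filter, Finset.mem_Icc, mem_closedBall, Real.dist_eq]
  exact ⟨p, ⟨⟨hp0, hpa⟩, hnint⟩, hdist'.le⟩

theorem exists_finset_card_le_subset_iUnion_closedBall {a b : ℕ} (ha : 0 < a) (hb : 0 < b)
    {ψ φ : ℝ} (hψ : 0 ≤ ψ) (hφ : 0 ≤ φ) :
    ∃ C : Finset ℝ, (C.card : ℝ) ≤ 2 * Nat.gcd a b + 8 * a * b * max (ψ / a) (φ / b) ∧
      {x | x ∈ Icc (0 : ℝ) 1 ∧ nint (a * x) < ψ ∧ nint (b * x) < φ}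
        ⊆ ⋃ c ∈ C, closedBall c (ψ / a) := by
  set T := (Finset.Icc (0 : ℤ) a).filter (fun p : ℤ => nint (b * p / a) < φ + b * ψ / a)
  refine ⟨T.image fun p : ℤ => (p / a : ℝ), ?_, ?_⟩
  · have haR : (0 : ℝ) < a := by exact_mod_cast ha
    have hbR : (0 : ℝ) < b := by exact_mod_cast hb
    have hT := card_filter_nint_lt_le b ha (by positivity : 0 ≤ φ + b * ψ / a)
    have hψM : a * b * (ψ / a) ≤ a * b * max (ψ / a) (φ / b) := by gcongr; exact le_max_left ..
    have hφM : a * b * (φ / b) ≤ a * b * max (ψ / a) (φ / b) := by gcongr; exact le_max_right ..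
    calc ((T.image fun p : ℤ => (p / a : ℝ)).card : ℝ) ≤ T.card := by
          exact_mod_cast Finset.card_image_le
      _ ≤ 2 * Nat.gcd a b + 4 * (a * b * (φ / b)) + 4 * (a * b * (ψ / a)) := by
          convert hT using 1; field_simp; ring
      _ ≤ 2 * Nat.gcd a b + 8 * a * b * max (ψ / a) (φ / b) := by linarith
  · rw [Finset.set_biUnion_finset_image]
    exact subset_iUnion_closedBall_div b ha ψ φ

theorem exists_finset_card_le_subset_iUnion_closedBall_min {a b : ℕ} (ha : 0 < a) (hb : 0 < b)
    {ψ φ : ℝ} (hψ : 0 ≤ ψ) (hφ : 0 ≤ φ) :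
    ∃ C : Finset ℝ, (C.card : ℝ) ≤ 2 * Nat.gcd a b + 8 * a * b * max (ψ / a) (φ / b) ∧
      {x | x ∈ Icc (0 : ℝ) 1 ∧ nint (a * x) < ψ ∧ nint (b * x) < φ}
        ⊆ ⋃ c ∈ C, closedBall c (min (ψ / a) (φ / b)) := by
  rcases le_total (ψ / a) (φ / b) with h | h
  · rw [min_eq_left h]
    exact exists_finset_card_le_subset_iUnion_closedBall ha hb hψ hφ
  · obtain ⟨C, hC, hcover⟩ := exists_finset_card_le_subset_iUnion_closedBall hb ha hφ hψ
    refine ⟨C, ?_, ?_⟩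
    · rw [Nat.gcd_comm, max_comm]; linarith
    · rw [min_eq_right h]
      exact fun x ⟨hx, hψx, hφx⟩ => hcover ⟨hx, hφx, hψx⟩

theorem stmt12_general (a b : ℕ → ℕ) (ha : ∀ n, 0 < a n) (hb : ∀ n, 0 < b n)
    (ψ φ : ℕ → ℝ) (hψ : ∀ n, ψ n ∈ Ioo (0 : ℝ) 1) (hφ : ∀ n, φ n ∈ Ioo (0 : ℝ) 1)
    (s : ℝ) (hs0 : 0 < s)
    (hsum : Summable (fun n =>
      ((Nat.gcd (a n) (b n) : ℝ)
          + (a n : ℝ) * (b n : ℝ) * max (ψ n / (a n : ℝ)) (φ n / (b n : ℝ)))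
        * min (ψ n / (a n : ℝ)) (φ n / (b n : ℝ)) ^ s)) :
    μH[s] {x : ℝ | x ∈ Icc (0 : ℝ) 1 ∧
        ∃ᶠ n in atTop, nint ((a n : ℝ) * x) < ψ n ∧ nint ((b n : ℝ) * x) < φ n} = 0 := by
  choose C hC hcover using fun n => exists_finset_card_le_subset_iUnion_closedBall_min
    (ha n) (hb n) (hψ n).1.le (hφ n).1.le
  have hr : ∀ n, 0 ≤ min (ψ n / a n) (φ n / b n) := fun n =>
    le_min (div_nonneg (hψ n).1.le (Nat.cast_nonneg _)) (div_nonneg (hφ n).1.le (Nat.cast_nonneg _))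
  refine measure_mono_null ?_ (Measure.hausdorffMeasure_limsup_eq_zero_of_summable hs0 _ C _ hr
    hcover ?_)
  · rintro x ⟨hx, hfreq⟩
    exact mem_limsup_iff_frequently_mem.2 (hfreq.mono fun n hn => ⟨hx, hn⟩)
  refine (hsum.mul_left 8).of_nonneg_of_le
    (fun n => mul_nonneg (Nat.cast_nonneg _) (Real.rpow_nonneg (hr n) s)) fun n => ?_
  have hgcd : (0 : ℝ) ≤ Nat.gcd (a n) (b n) := Nat.cast_nonneg _
  calc ((C n).card : ℝ) * min (ψ n / a n) (φ n / b n) ^ s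
      ≤ 8 * (Nat.gcd (a n) (b n) + a n * b n * max (ψ n / a n) (φ n / b n))
          * min (ψ n / a n) (φ n / b n) ^ s :=
        mul_le_mul_of_nonneg_right (by linarith [hC n]) (Real.rpow_nonneg (hr n) s)
    _ = _ := mul_assoc _ _ _

theorem stmt12 (a b : ℕ → ℕ) (ha : ∀ n, 0 < a n) (hb : ∀ n, 0 < b n)
    (ψ φ : ℕ → ℝ) (hψ : ∀ n, ψ n ∈ Ioo (0 : ℝ) 1) (hφ : ∀ n, φ n ∈ Ioo (0 : ℝ) 1)
    (s : ℝ) (hs0 : 0 < s) (hs1 : s ≤ 1)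
    (hsum : Summable (fun n =>
      ((Nat.gcd (a n) (b n) : ℝ)
          + (a n : ℝ) * (b n : ℝ) * max (ψ n / (a n : ℝ)) (φ n / (b n : ℝ)))
        * min (ψ n / (a n : ℝ)) (φ n / (b n : ℝ)) ^ s)) :
    μH[s] {x : ℝ | x ∈ Icc (0 : ℝ) 1 ∧
        ∃ᶠ n in atTop, nint ((a n : ℝ) * x) < ψ n ∧ nint ((b n : ℝ) * x) < φ n} = 0 :=
  stmt12_general a b ha hb ψ φ hψ hφ s hs0 hsum
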